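/- Let α be a linear order and let s, t : Fin m → α be two sequences such that (1) E(s) = E(t), and (2) s and t have the same multiset of values, i.e., for every a : α, the number of indices i with s(i) = a equals the number of indices i with t(i) = a. Then s = t. (That is, a string is uniquely determined by the multiset of its characters together with its rank encoding.) -/

import Mathlib

/- The rank encoding `E(s)` of a sequence `s : Fin m → α` over a linear order:
`E(s)(i) = d_i + 1` if `s i` equals some earlier character, and `d_i + 1/2` otherwise,
where `d_i` is the number of distinct values among `s 0, …, s (i-1)` strictly smaller
than `s i`. -/
open Classical in
noncomputable def rankEncode {m : ℕ} {α : Type*} [LinearOrder α] (s : Fin m → α) :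
    Fin m → ℚ := fun i =>
  ((((Finset.univ : Finset (Fin m)).filter (fun j : Fin m => (j : ℕ) < (i : ℕ))).image s).filter
      (fun a => a < s i)).card +
    (if ∃ j : Fin m, (j : ℕ) < (i : ℕ) ∧ s j = s i then 1 else 1/2)

/-! Equal rank encodings make `s` and `t` order-isomorphic, by induction along the positions:
`E(s)(j)` records the rank of `s j` among the distinct values `P` of the prefix before `j` and
whether `s j ∈ P`; as ranks of prefix values agree by induction, this fixes how `s j` compares
with each of them. Order-isomorphic sequences with the same multiset of values coincide:
`#{k | t k < t i} = #{k | s k < s i} = #{k | t k < s i}`, likewise for `≤`, and these two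
counts determine a value of `t`. -/

open Finset

theorem natCast_add_ite_eq_natCast_add_ite_iff {a b : ℕ} {p q : Prop} [Decidable p]
    [Decidable q] :
    (a : ℚ) + (if p then 1 else 1 / 2) = b + (if q then 1 else 1 / 2) ↔ a = b ∧ (p ↔ q) := by
  refine ⟨fun h => ?_, fun ⟨hab, hpq⟩ => by simp [hab, hpq]⟩
  have hdouble : ((2 * a + (if p then 2 else 1) : ℕ) : ℚ) =
      ((2 * b + (if q then 2 else 1) : ℕ) : ℚ) := by
    push_cast; split_ifs at h ⊢ <;> linarith
  have := Nat.cast_injective hdouble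
  split_ifs at this <;> simp_all <;> omega

section

variable {ι α β : Type*}

theorem card_image_eq_card_image_of_eq_iff_eq [DecidableEq α] [DecidableEq β] {J : Finset ι}
    {s : ι → α} {t : ι → β} (h : ∀ k ∈ J, ∀ l ∈ J, s k = s l ↔ t k = t l) :
    #(J.image s) = #(J.image t) := by
  set graph := J.image fun k => (s k, t k)
  have hs : J.image s = graph.image Prod.fst := by rw [image_image]; rfl
  have ht : J.image t = graph.image Prod.snd := by rw [image_image]; rfl
  rw [hs, ht, card_image_of_injOn, card_image_of_injOn (f := Prod.snd)] <;>
  · rintro _ hx _ hy hxy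
    obtain ⟨k, hk, rfl⟩ := mem_image.1 hx
    obtain ⟨l, hl, rfl⟩ := mem_image.1 hy
    simp_all

theorem lt_iff_card_filter_lt_lt_card_filter_lt [LinearOrder α] {P : Finset α} {a : α}
    (ha : a ∈ P) (c : α) : a < c ↔ #{x ∈ P | x < a} < #{x ∈ P | x < c} := by
  refine ⟨fun hac => card_lt_card ?_, fun h => ?_⟩
  · exact (ssubset_iff_of_subset (monotone_filter_right _ fun x _ hx => hx.trans hac)).2
      ⟨a, by simp [ha, hac]⟩
  · by_contra! hca
    exact (card_le_card (monotone_filter_right _ fun x _ hx => hx.trans_le hca)).not_gt h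

theorem card_filter_comp_eq_of_card_fiber_eq [Fintype ι] [DecidableEq α] {s t : ι → α}
    (h : ∀ a, #{i | s i = a} = #{i | t i = a}) (p : α → Prop) [DecidablePred p] :
    #{i | p (s i)} = #{i | p (t i)} := by
  have hmap : univ.val.map s = univ.val.map t := Multiset.ext.2 fun a => by
    simp only [Multiset.count_map, eq_comm (a := a)]
    exact h a
  have := congrArg (Multiset.countP p) hmap
  rwa [Multiset.countP_map, Multiset.countP_map] at this

theorem eq_of_card_filter_lt_eq_of_card_filter_le_eq [Fintype ι] [LinearOrder α] (t : ι → α)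
    (i : ι) {b : α} (hlt : #{j | t j < t i} = #{j | t j < b})
    (hle : #{j | t j ≤ t i} = #{j | t j ≤ b}) : t i = b := by
  have hi : #{j | t j < t i} < #{j | t j ≤ t i} :=
    card_lt_card ((ssubset_iff_of_subset (monotone_filter_right _ fun _ _ => le_of_lt)).2
      ⟨i, by simp⟩)
  rcases lt_trichotomy (t i) b with hib | hib | hbi
  · have := card_le_card (monotone_filter_right univ fun j _ (hj : t j ≤ t i) => hj.trans_lt hib)
    omega
  · exact hib
  · have := card_le_card (monotone_filter_right univ fun j _ (hj : t j ≤ b) => hj.trans_lt hbi)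
    omega

def OrderIsomorphicOn [LT α] [LT β] (s : ι → α) (t : ι → β) (I : Set ι) : Prop :=
  ∀ a ∈ I, ∀ b ∈ I, s a < s b ↔ t a < t b

namespace OrderIsomorphicOn

variable [LinearOrder α] [LinearOrder β] {s : ι → α} {t : ι → β}

theorem eq_iff_eq {I : Set ι} (h : OrderIsomorphicOn s t I) {a b : ι} (ha : a ∈ I)
    (hb : b ∈ I) :
    s a = s b ↔ t a = t b := by
  simp only [le_antisymm_iff, ← not_lt, h a ha b hb, h b hb a ha]

theorem card_filter_image_lt_eq {I : Finset ι} (h : OrderIsomorphicOn s t I) {a : ι}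
    (ha : a ∈ I) :
    #{x ∈ I.image s | x < s a} = #{y ∈ I.image t | y < t a} := by
  rw [filter_image, filter_image, filter_congr fun k hk => h k hk a ha]
  exact card_image_eq_card_image_of_eq_iff_eq fun k hk l hl =>
    h.eq_iff_eq (mem_filter.1 hk).1 (mem_filter.1 hl).1

theorem insert_of_card_filter_image_lt_eq {I : Finset ι} (h : OrderIsomorphicOn s t I) {j : ι}
    (hcard : #{x ∈ I.image s | x < s j} = #{y ∈ I.image t | y < t j})
    (hmem : s j ∈ I.image s ↔ t j ∈ I.image t) :
    OrderIsomorphicOn s t (insert j I) := by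
  have below : ∀ i ∈ I, s i < s j ↔ t i < t j := fun i hi => by
    rw [lt_iff_card_filter_lt_lt_card_filter_lt (mem_image_of_mem s hi),
      lt_iff_card_filter_lt_lt_card_filter_lt (mem_image_of_mem t hi),
      h.card_filter_image_lt_eq hi, hcard]
  have above : ∀ i ∈ I, s j < s i ↔ t j < t i := fun i hi => by
    by_cases hj : s j ∈ I.image s
    · rw [lt_iff_card_filter_lt_lt_card_filter_lt hj,
        lt_iff_card_filter_lt_lt_card_filter_lt (hmem.1 hj), h.card_filter_image_lt_eq hi, hcard]
    · have hs : s i ≠ s j := fun hij => hj (hij ▸ mem_image_of_mem s hi)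
      have ht : t i ≠ t j := fun hij => hmem.not.1 hj (hij ▸ mem_image_of_mem t hi)
      rw [← hs.symm.le_iff_lt, ← ht.symm.le_iff_lt, ← not_lt, ← not_lt, below i hi]
  rintro a (rfl | ha) b (rfl | hb)
  · exact iff_of_false (lt_irrefl _) (lt_irrefl _)
  · exact above b hb
  · exact below a ha
  · exact h a ha b hb

end OrderIsomorphicOn

end

section

variable {m : ℕ} {α β : Type*} [LinearOrder α] [LinearOrder β]

theorem rankEncode_apply (s : Fin m → α) (i : Fin m) :
    rankEncode s i =
      #{a ∈ (Iio i).image s | a < s i} + if s i ∈ (Iio i).image s then 1 else 1 / 2 := by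
  have hIio : ({j | (j : ℕ) < i} : Finset (Fin m)) = Iio i := by ext; simp
  simp only [rankEncode, hIio]
  congr 2
  simp [and_comm]

theorem rankEncode_apply_eq_iff (s : Fin m → α) (t : Fin m → β) (i : Fin m) :
    rankEncode s i = rankEncode t i ↔
      #{a ∈ (Iio i).image s | a < s i} = #{b ∈ (Iio i).image t | b < t i} ∧
        (s i ∈ (Iio i).image s ↔ t i ∈ (Iio i).image t) := by
  rw [rankEncode_apply, rankEncode_apply, natCast_add_ite_eq_natCast_add_ite_iff]

theorem orderIsomorphicOn_Iic_of_rankEncode_eq {s : Fin m → α} {t : Fin m → β}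
    (hE : rankEncode s = rankEncode t) (j : Fin m) : OrderIsomorphicOn s t (Set.Iic j) := by
  induction j using WellFoundedLT.induction with
  | _ j ih =>
    have hIio : OrderIsomorphicOn s t (Iio j : Finset (Fin m)) := fun a ha b hb =>
      ih (max a b) (max_lt (mem_Iio.1 ha) (mem_Iio.1 hb)) a (le_max_left a b) b (le_max_right a b)
    obtain ⟨hcard, hmem⟩ := (rankEncode_apply_eq_iff s t j).1 (congrFun hE j)
    simpa using hIio.insert_of_card_filter_image_lt_eq hcard hmem

end

open Classical in
/-- A string over a linear order is uniquely determined by the multiset of its characters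
together with its rank encoding. -/
theorem eq_of_rankEncode_eq_of_count_eq {m : ℕ} {α : Type*} [LinearOrder α]
    (s t : Fin m → α)
    (hE : rankEncode s = rankEncode t)
    (hcount : ∀ a : α,
      ((Finset.univ : Finset (Fin m)).filter (fun i => s i = a)).card =
        ((Finset.univ : Finset (Fin m)).filter (fun i => t i = a)).card) :
    s = t := by
  have hiso : ∀ i j, s i < s j ↔ t i < t j := fun i j =>
    orderIsomorphicOn_Iic_of_rankEncode_eq hE (max i j) i (le_max_left i j) j (le_max_right i j)
  funext i
  refine (eq_of_card_filter_lt_eq_of_card_filter_le_eq t i ?_ ?_).symm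
  · rw [← card_filter_comp_eq_of_card_fiber_eq hcount (· < s i)]
    exact congrArg card (filter_congr fun j _ => (hiso j i).symm)
  · rw [← card_filter_comp_eq_of_card_fiber_eq hcount (· ≤ s i)]
    exact congrArg card (filter_congr fun j _ => by simp only [← not_lt, hiso i j])
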